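/- Let p : 𝔻 → ℂ be holomorphic with Re p(ζ) ≥ 0 for all ζ ∈ 𝔻 and suppose p is not identically zero near a point where it is needed; then for any ζ, ζ₀ ∈ 𝔻 with |ζ| ≤ r < 1 one has |p(ζ)| ≤ √2 · |p(ζ₀)| · (|1 − conj(ζ₀)·ζ| + |ζ₀ − ζ|)² / ((1 − |ζ₀|²)(1 − |ζ|²)). In particular |p(ζ)| ≤ 16√2 · |p(ζ₀)| / ((1 − |ζ₀|²)(1 − r²)). -/

import Mathlib

/-!
Harnack's inequality at the centre of the disk, `‖q w‖ (1 - ‖w‖) ≤ ‖q 0‖ (1 + ‖w‖)` for `q`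
holomorphic with `0 ≤ re q`, is Schwarz's lemma applied to the Cayley transform
`(q - q 0) / (q + conj (q 0))`. Composing `p` with the disk automorphism exchanging `0` and `ζ₀`
moves the centre to `ζ₀`; the point `ζ` then corresponds to `w` with `‖w‖ = B / A`, where
`A = ‖1 - conj ζ₀ ζ‖`, `B = ‖ζ₀ - ζ‖`, and `A² - B² = (1 - ‖ζ₀‖²)(1 - ‖ζ‖²)`. Multiplying by
`A (A + B)` gives the first bound (even with `1` in place of `√2`), and `A + B ≤ 4` the second.
-/

open Complex ComplexConjugate Set Metric Topology

section DiskInvolution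

lemma norm_one_sub_conj_mul_sq_sub_norm_sub_sq (a b : ℂ) :
    ‖1 - conj a * b‖ ^ 2 - ‖a - b‖ ^ 2 = (1 - ‖a‖ ^ 2) * (1 - ‖b‖ ^ 2) := by
  simp only [Complex.sq_norm, normSq_apply, sub_re, sub_im, mul_re, mul_im, one_re, one_im,
    conj_re, conj_im]
  ring

variable {a w : ℂ}

lemma one_sub_conj_mul_ne_zero (ha : ‖a‖ < 1) (hw : ‖w‖ < 1) : 1 - conj a * w ≠ 0 := by
  have : ‖conj a * w‖ < 1 := by
    rw [norm_mul, RCLike.norm_conj]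
    exact mul_lt_one_of_nonneg_of_lt_one_left (norm_nonneg a) ha hw.le
  rw [sub_ne_zero]
  rintro h
  simp [← h] at this

/-- The automorphism of the unit disk exchanging `0` and `a`. -/
noncomputable def diskInvolution (a w : ℂ) : ℂ := (a - w) / (1 - conj a * w)

lemma diskInvolution_zero (a : ℂ) : diskInvolution a 0 = a := by
  simp [diskInvolution]

lemma norm_diskInvolution_lt_one (ha : ‖a‖ < 1) (hw : ‖w‖ < 1) : ‖diskInvolution a w‖ < 1 := by
  have hden := norm_pos_iff.2 (one_sub_conj_mul_ne_zero ha hw)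
  rw [diskInvolution, norm_div, div_lt_one hden, ← sq_lt_sq₀ (norm_nonneg _) hden.le,
    ← sub_pos, norm_one_sub_conj_mul_sq_sub_norm_sub_sq]
  have := norm_nonneg a
  have := norm_nonneg w
  exact mul_pos (by nlinarith) (by nlinarith)

lemma diskInvolution_diskInvolution (ha : ‖a‖ < 1) (hw : ‖w‖ < 1) :
    diskInvolution a (diskInvolution a w) = w := by
  have hden := one_sub_conj_mul_ne_zero ha hw
  have hden' := one_sub_conj_mul_ne_zero ha (norm_diskInvolution_lt_one ha hw)
  unfold diskInvolution at hden' ⊢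
  field_simp at hden' ⊢
  rw [div_eq_iff fun h ↦ hden' (by rw [h, zero_div])]
  ring

lemma mapsTo_diskInvolution (ha : ‖a‖ < 1) :
    MapsTo (diskInvolution a) (ball 0 1) (ball 0 1) := fun w hw ↦ by
  simpa using norm_diskInvolution_lt_one ha (mem_ball_zero_iff.1 hw)

lemma differentiableOn_diskInvolution (ha : ‖a‖ < 1) :
    DifferentiableOn ℂ (diskInvolution a) (ball 0 1) :=
  (differentiableOn_const a).sub differentiableOn_id |>.div
    ((differentiableOn_const 1).sub ((differentiableOn_const _).mul differentiableOn_id))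
    fun _ hz ↦ one_sub_conj_mul_ne_zero ha (mem_ball_zero_iff.1 hz)

end DiskInvolution

section Harnack

variable {q : ℂ → ℂ} {w : ℂ}

lemma norm_sub_le_norm_add_conj {a b : ℂ} (ha : 0 ≤ a.re) (hb : 0 ≤ b.re) :
    ‖a - b‖ ≤ ‖a + conj b‖ := by
  rw [← sq_le_sq₀ (norm_nonneg _) (norm_nonneg _), Complex.sq_norm, Complex.sq_norm]
  simp only [normSq_apply, add_re, add_im, sub_re, sub_im, conj_re, conj_im]
  nlinarith [mul_nonneg ha hb]

lemma norm_mul_one_sub_norm_le_of_re_pos (hq : DifferentiableOn ℂ q (ball 0 1))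
    (hre : ∀ z ∈ ball (0 : ℂ) 1, 0 ≤ (q z).re) (h₀ : 0 < (q 0).re) (hw : ‖w‖ < 1) :
    ‖q w‖ * (1 - ‖w‖) ≤ ‖q 0‖ * (1 + ‖w‖) := by
  set c := q 0
  have hden : ∀ z ∈ ball (0 : ℂ) 1, q z + conj c ≠ 0 := fun z hz h ↦ by
    have := congrArg re h
    simp only [add_re, conj_re, zero_re] at this
    linarith [hre z hz]
  have hmaps : MapsTo (fun z ↦ (q z - c) / (q z + conj c)) (ball 0 1) (closedBall 0 1) :=
    fun z hz ↦ by
      rw [mem_closedBall_zero_iff, norm_div]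
      exact div_le_one_of_le₀ (norm_sub_le_norm_add_conj (hre z hz) h₀.le) (norm_nonneg _)
  have hschwarz := Complex.norm_le_norm_of_mapsTo_ball
    ((hq.sub_const c).div (hq.add_const _) hden) hmaps (by simp [c]) hw
  have hwball : w ∈ ball (0 : ℂ) 1 := mem_ball_zero_iff.2 hw
  rw [Pi.div_apply, norm_div, div_le_iff₀ (norm_pos_iff.2 (hden w hwball))] at hschwarz
  have h_sub : ‖q w‖ - ‖c‖ ≤ ‖q w - c‖ := norm_sub_norm_le _ _
  have h_add : ‖q w + conj c‖ ≤ ‖q w‖ + ‖c‖ := (norm_add_le _ _).trans_eq (by simp)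
  nlinarith [mul_le_mul_of_nonneg_left h_add (norm_nonneg w)]

theorem norm_mul_one_sub_norm_le_of_re_nonneg (hq : DifferentiableOn ℂ q (ball 0 1))
    (hre : ∀ z ∈ ball (0 : ℂ) 1, 0 ≤ (q z).re) (hw : ‖w‖ < 1) :
    ‖q w‖ * (1 - ‖w‖) ≤ ‖q 0‖ * (1 + ‖w‖) := by
  -- `q + ε` has positive real part; let `ε → 0⁺`.
  have hshift : ∀ ε ∈ Ioi (0 : ℝ), ‖q w + ε‖ * (1 - ‖w‖) ≤ ‖q 0 + ε‖ * (1 + ‖w‖) :=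
    fun ε hε ↦ norm_mul_one_sub_norm_le_of_re_pos (q := fun z ↦ q z + ε) (hq.add_const _)
      (fun z hz ↦ by simpa using add_nonneg (hre z hz) (le_of_lt hε))
      (by simpa using add_pos_of_nonneg_of_pos (hre 0 (by simp)) hε) hw
  have hlim : ∀ z : ℂ, ∀ t : ℝ, Filter.Tendsto (fun ε : ℝ ↦ ‖z + ε‖ * t)
      (𝓝[>] 0) (𝓝 (‖z‖ * t)) := fun z t ↦ by
    have : Continuous fun ε : ℝ ↦ ‖z + ε‖ * t := by fun_prop
    simpa using (this.tendsto 0).mono_left nhdsWithin_le_nhds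
  exact le_of_tendsto_of_tendsto (hlim _ _) (hlim _ _) (eventually_nhdsWithin_of_forall hshift)

theorem norm_mul_le_of_re_nonneg {p : ℂ → ℂ} (hp : DifferentiableOn ℂ p (ball 0 1))
    (hre : ∀ z ∈ ball (0 : ℂ) 1, 0 ≤ (p z).re) {ζ ζ₀ : ℂ} (hζ₀ : ‖ζ₀‖ < 1) (hζ : ‖ζ‖ < 1) :
    ‖p ζ‖ * ((1 - ‖ζ₀‖ ^ 2) * (1 - ‖ζ‖ ^ 2)) ≤
      ‖p ζ₀‖ * (‖1 - conj ζ₀ * ζ‖ + ‖ζ₀ - ζ‖) ^ 2 := by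
  set A := ‖1 - conj ζ₀ * ζ‖
  set B := ‖ζ₀ - ζ‖
  have hA : 0 ≤ A := norm_nonneg _
  have hB : 0 ≤ B := norm_nonneg _
  have hw : ‖diskInvolution ζ₀ ζ‖ * A = B := by
    rw [diskInvolution, norm_div, div_mul_cancel₀ _ (norm_ne_zero_iff.2
      (one_sub_conj_mul_ne_zero hζ₀ hζ))]
  have hharnack := norm_mul_one_sub_norm_le_of_re_nonneg
    (hp.comp (differentiableOn_diskInvolution hζ₀) (mapsTo_diskInvolution hζ₀))
    (fun z hz ↦ hre _ (mapsTo_diskInvolution hζ₀ hz)) (norm_diskInvolution_lt_one hζ₀ hζ)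
  simp only [Function.comp_apply, diskInvolution_diskInvolution hζ₀ hζ,
    diskInvolution_zero] at hharnack
  have key : ‖p ζ‖ * (A - B) ≤ ‖p ζ₀‖ * (A + B) := by
    rw [← hw]
    nlinarith [mul_le_mul_of_nonneg_right hharnack hA]
  rw [← norm_one_sub_conj_mul_sq_sub_norm_sub_sq]
  nlinarith [mul_le_mul_of_nonneg_right key (add_nonneg hA hB)]

end Harnack

theorem carath_class_growth_estimate
    (p : ℂ → ℂ) (hp : DifferentiableOn ℂ p (ball (0:ℂ) 1))
    (hRe : ∀ z ∈ ball (0:ℂ) 1, 0 ≤ (p z).re)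
    (r : ℝ) (hr : r ∈ Ioo (0:ℝ) 1)
    (ζ ζ₀ : ℂ) (hζ₀ : ζ₀ ∈ ball (0:ℂ) 1) (hζr : ‖ζ‖ ≤ r) :
    ‖p ζ‖ ≤ Real.sqrt 2 * ‖p ζ₀‖ *
        (‖1 - (starRingEnd ℂ) ζ₀ * ζ‖ + ‖ζ₀ - ζ‖) ^ 2 /
        ((1 - ‖ζ₀‖ ^ 2) * (1 - ‖ζ‖ ^ 2)) ∧
      ‖p ζ‖ ≤ 16 * Real.sqrt 2 * ‖p ζ₀‖ / ((1 - ‖ζ₀‖ ^ 2) * (1 - r ^ 2)) := by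
  rw [mem_ball_zero_iff] at hζ₀
  have hζ : ‖ζ‖ < 1 := hζr.trans_lt hr.2
  have hζ₀' : 0 < 1 - ‖ζ₀‖ ^ 2 := by nlinarith [norm_nonneg ζ₀]
  have hr' : 0 < 1 - r ^ 2 := by nlinarith [hr.1, hr.2]
  have hζ' : 1 - r ^ 2 ≤ 1 - ‖ζ‖ ^ 2 := by nlinarith [norm_nonneg ζ]
  have hsum : ‖1 - conj ζ₀ * ζ‖ + ‖ζ₀ - ζ‖ ≤ 4 := by
    have h1 := norm_sub_le (1 : ℂ) (conj ζ₀ * ζ)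
    have h2 := norm_sub_le ζ₀ ζ
    have h3 : ‖conj ζ₀ * ζ‖ ≤ 1 := by
      rw [norm_mul, RCLike.norm_conj]
      exact mul_le_one₀ hζ₀.le (norm_nonneg ζ) hζ.le
    rw [norm_one] at h1
    linarith
  have harnack : ‖p ζ‖ ≤ Real.sqrt 2 * ‖p ζ₀‖ * (‖1 - conj ζ₀ * ζ‖ + ‖ζ₀ - ζ‖) ^ 2 /
      ((1 - ‖ζ₀‖ ^ 2) * (1 - ‖ζ‖ ^ 2)) := by
    rw [le_div_iff₀ (mul_pos hζ₀' (hr'.trans_le hζ'))]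
    refine (norm_mul_le_of_re_nonneg hp hRe hζ₀ hζ).trans ?_
    gcongr
    exact le_mul_of_one_le_left (norm_nonneg _) (Real.one_le_sqrt.2 one_le_two)
  refine ⟨harnack, harnack.trans ?_⟩
  rw [show 16 * √2 * ‖p ζ₀‖ = √2 * ‖p ζ₀‖ * 4 ^ 2 by ring]
  gcongr
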